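/- arXiv:math/0402239 — 4 statements merged into one kernel-verified Lean document; each statement's English description precedes it below -/
import Mathlib

section
/- Let 1 ≤ p ≤ 2 and let z and w be complex numbers. Then |z+w|^p + |z−w|^p ≥ (|z|+|w|)^p + ||z|−|w||^p. -/
/-!
Squaring everything, `‖z + w‖²` and `‖z - w‖²` lie in `[0, (‖z‖ + ‖w‖)²]` and, by the
parallelogram law, have the same sum as `(‖z‖ + ‖w‖)²` and `(‖z‖ - ‖w‖)²`. So the pair
`(‖z + w‖², ‖z - w‖²)` is majorized by `((‖z‖ + ‖w‖)², (‖z‖ - ‖w‖)²)`, and the inequality is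
Karamata's inequality for the concave function `t ↦ t ^ (p / 2)`.
-/

open Real

theorem ConcaveOn.add_le_add_of_le_of_add_eq {s : Set ℝ} {f : ℝ → ℝ} (hf : ConcaveOn ℝ s f)
    {u v S D : ℝ} (hS : S ∈ s) (hD : D ∈ s) (huS : u ≤ S) (hvS : v ≤ S)
    (hsum : u + v = S + D) : f S + f D ≤ f u + f v := by
  rcases (show D ≤ S by linarith).eq_or_lt with hDS | hDS
  · obtain rfl : u = S := by linarith
    obtain rfl : v = D := by linarith
    rfl
  set t := (u - D) / (S - D)
  have hSD : S - D ≠ 0 := (sub_pos.2 hDS).ne'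
  have ht0 : 0 ≤ t := div_nonneg (by linarith) (by linarith)
  have ht1 : t ≤ 1 := (div_le_one (by linarith)).2 (by linarith)
  have hu : t • S + (1 - t) • D = u := by
    simp only [t, smul_eq_mul]
    field_simp
    ring
  have hv : (1 - t) • S + t • D = v := by
    simp only [t, smul_eq_mul]
    field_simp
    linear_combination (D - S) * hsum
  have hfu := hf.2 hS hD ht0 (sub_nonneg.2 ht1) (add_sub_cancel t 1)
  have hfv := hf.2 hS hD (sub_nonneg.2 ht1) ht0 (sub_add_cancel 1 t)
  rw [hu] at hfu
  rw [hv] at hfv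
  simp only [smul_eq_mul] at hfu hfv
  linear_combination hfu + hfv

theorem rpow_add_rpow_le_of_sq_add_sq_eq {p a b S D : ℝ} (hp0 : 0 ≤ p) (hp2 : p ≤ 2)
    (ha : 0 ≤ a) (hb : 0 ≤ b) (hS : 0 ≤ S) (hD : 0 ≤ D) (haS : a ≤ S) (hbS : b ≤ S)
    (hsq : a ^ 2 + b ^ 2 = S ^ 2 + D ^ 2) : S ^ p + D ^ p ≤ a ^ p + b ^ p := by
  have rpow_eq_sq_rpow : ∀ x : ℝ, 0 ≤ x → x ^ p = (x ^ 2) ^ (p / 2) := fun x hx => by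
    rw [← rpow_natCast_mul hx]
    norm_num [mul_div_cancel₀]
  rw [rpow_eq_sq_rpow a ha, rpow_eq_sq_rpow b hb, rpow_eq_sq_rpow S hS, rpow_eq_sq_rpow D hD]
  exact (concaveOn_rpow (by linarith) (by linarith)).add_le_add_of_le_of_add_eq
    (Set.mem_Ici.2 (by positivity)) (Set.mem_Ici.2 (by positivity))
    (pow_le_pow_left₀ ha haS 2) (pow_le_pow_left₀ hb hbS 2) hsq

theorem add_norm_rpow_add_abs_sub_norm_rpow_le (𝕜 : Type*) {E : Type*} [RCLike 𝕜]
    [SeminormedAddCommGroup E] [InnerProductSpace 𝕜 E] {p : ℝ} (hp0 : 0 ≤ p) (hp2 : p ≤ 2)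
    (x y : E) :
    (‖x‖ + ‖y‖) ^ p + |‖x‖ - ‖y‖| ^ p ≤ ‖x + y‖ ^ p + ‖x - y‖ ^ p := by
  have hsq : ‖x + y‖ ^ 2 + ‖x - y‖ ^ 2 = (‖x‖ + ‖y‖) ^ 2 + |‖x‖ - ‖y‖| ^ 2 := by
    rw [parallelogram_law_with_norm 𝕜, sq_abs]
    ring
  exact rpow_add_rpow_le_of_sq_add_sq_eq hp0 hp2 (norm_nonneg _) (norm_nonneg _)
    (by positivity) (abs_nonneg _) (norm_add_le x y) (norm_sub_le x y) hsq

/-- For `1 ≤ p ≤ 2` and complex numbers `z`, `w`,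
`|z+w|^p + |z−w|^p ≥ (|z|+|w|)^p + ||z|−|w||^p`. -/
theorem complex_abs_pow_ineq_le_two (p : ℝ) (hp1 : 1 ≤ p) (hp2 : p ≤ 2) (z w : ℂ) :
    (‖z‖ + ‖w‖) ^ p + |‖z‖ - ‖w‖| ^ p ≤
      ‖z + w‖ ^ p + ‖z - w‖ ^ p :=
  add_norm_rpow_add_abs_sub_norm_rpow_le ℂ (zero_le_one.trans hp1) hp2 z w
end

section
/- Let 2 ≤ p < ∞ and let z and w be complex numbers. Then |z+w|^p + |z−w|^p ≤ (|z|+|w|)^p + ||z|−|w||^p. -/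
/-! With `q = p / 2 ≥ 1`, the map `x ↦ x ^ q` is convex on `[0, ∞)`. The parallelogram law gives
`|z + w|² + |z - w|² = (|z| + |w|)² + (|z| - |w|)²`, and by the triangle inequality the two
squares on the left lie between the two on the right. A convex function takes a larger total
value on the outer pair `a ≤ b, c ≤ d` of two pairs with the same sum `b + c = a + d`. -/

open Set

theorem ConvexOn.add_le_add_of_add_eq {𝕜 β : Type*} [Field 𝕜] [LinearOrder 𝕜]
    [IsStrictOrderedRing 𝕜] [AddCommGroup β] [PartialOrder β] [IsOrderedAddMonoid β]
    [Module 𝕜 β] {s : Set 𝕜} {f : 𝕜 → β} (hf : ConvexOn 𝕜 s f)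
    {a b c d : 𝕜} (ha : a ∈ s) (hd : d ∈ s) (hab : a ≤ b) (hac : a ≤ c) (h : b + c = a + d) :
    f b + f c ≤ f a + f d := by
  rcases (show a ≤ d by linarith).eq_or_lt with rfl | had
  · obtain rfl : b = a := by linarith
    obtain rfl : c = b := by linarith
    rfl
  obtain rfl : c = a + d - b := eq_sub_of_add_eq' h
  have hda : d - a ≠ 0 := (sub_pos.mpr had).ne'
  set t := (b - a) / (d - a)
  have ht0 : 0 ≤ t := div_nonneg (sub_nonneg.mpr hab) (sub_pos.mpr had).le
  have ht1 : t ≤ 1 := (div_le_one (sub_pos.mpr had)).mpr (by linarith)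
  have hb : (1 - t) • a + t • d = b := by simp only [t, smul_eq_mul]; field_simp; ring
  have hc : t • a + (1 - t) • d = a + d - b := by simp only [t, smul_eq_mul]; field_simp; ring
  have hfb := hf.2 ha hd (sub_nonneg.mpr ht1) ht0 (sub_add_cancel 1 t)
  have hfc := hf.2 ha hd ht0 (sub_nonneg.mpr ht1) (add_sub_cancel t 1)
  rw [hb] at hfb
  rw [hc] at hfc
  calc f b + f (a + d - b)
      ≤ ((1 - t) • f a + t • f d) + (t • f a + (1 - t) • f d) := add_le_add hfb hfc
    _ = f a + f d := by module

theorem Real.sq_rpow_div_two (x p : ℝ) : (x ^ 2) ^ (p / 2) = |x| ^ p := by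
  rw [← sq_abs, ← Real.rpow_natCast_mul (abs_nonneg x), Nat.cast_ofNat,
    mul_div_cancel₀ p two_ne_zero]

/-- For `2 ≤ p < ∞` and complex numbers `z`, `w`,
`|z+w|^p + |z−w|^p ≤ (|z|+|w|)^p + ||z|−|w||^p`. -/
theorem complex_abs_pow_ineq_ge_two (p : ℝ) (hp : 2 ≤ p) (z w : ℂ) :
    ‖z + w‖ ^ p + ‖z - w‖ ^ p ≤
      (‖z‖ + ‖w‖) ^ p + |‖z‖ - ‖w‖| ^ p := by
  have hconv : ConvexOn ℝ (Ici 0) fun x : ℝ ↦ x ^ (p / 2) := convexOn_rpow (by linarith)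
  have hlow (u : ℂ) (hu : ‖u‖ = ‖w‖) : (‖z‖ - ‖w‖) ^ 2 ≤ ‖z + u‖ ^ 2 := by
    rw [← hu, ← sq_abs]
    exact pow_le_pow_left₀ (abs_nonneg _) (by simpa using abs_norm_sub_norm_le z (-u)) 2
  have hsum : ‖z + w‖ ^ 2 + ‖z - w‖ ^ 2 = (‖z‖ - ‖w‖) ^ 2 + (‖z‖ + ‖w‖) ^ 2 := by
    linear_combination parallelogram_law_with_norm ℝ z w
  have key := hconv.add_le_add_of_add_eq (sq_nonneg (‖z‖ - ‖w‖)) (sq_nonneg (‖z‖ + ‖w‖))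
    (hlow w rfl) (by simpa [sub_eq_add_neg] using hlow (-w) (norm_neg w)) hsum
  simp only [Real.sq_rpow_div_two, abs_norm, abs_of_nonneg (by positivity : 0 ≤ ‖z‖ + ‖w‖)] at key
  linarith
end

section
/- Let a, b ≥ 0 be real numbers and let 1 ≤ p < 2. Then the function c(t) = (a² + b² + 2abt)^{p/2} + (a² + b² − 2abt)^{p/2} is concave on the interval [−1, 1]; for p > 2 it is convex on [−1, 1]. -/
/-! Both summands are `x ↦ x ^ (p / 2)` composed with an affine map `t ↦ C ± c t`, where
`C = a² + b² ≥ |2ab| = |c|` keeps the argument nonnegative for `t ∈ [-1, 1]`. Since `x ^ (p / 2)` is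
concave on `[0, ∞)` for `0 ≤ p ≤ 2` and convex for `p ≥ 2`, so are both summands and their sum. -/

open Set

lemma abs_two_mul_le_add_sq (a b : ℝ) : |2 * a * b| ≤ a ^ 2 + b ^ 2 := by
  rw [abs_mul, abs_mul, abs_two, ← sq_abs a, ← sq_abs b]
  exact two_mul_le_add_sq |a| |b|

lemma Icc_subset_preimage_add_mul_Ici {C c : ℝ} (hc : |c| ≤ C) :
    Icc (-1 : ℝ) 1 ⊆ (fun t => C + c * t) ⁻¹' Ici 0 := by
  intro t ht
  have hct : |c * t| ≤ |c| := by
    rw [abs_mul]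
    exact mul_le_of_le_one_right (abs_nonneg c) (abs_le.mpr ht)
  show 0 ≤ C + c * t
  linarith [neg_abs_le (c * t)]

lemma ConcaveOn.comp_add_mul {f : ℝ → ℝ} {s : Set ℝ} (hf : ConcaveOn ℝ s f) (C c : ℝ) :
    ConcaveOn ℝ ((fun t => C + c * t) ⁻¹' s) (fun t => f (C + c * t)) :=
  hf.comp_affineMap (AffineMap.const ℝ ℝ C + c • AffineMap.id ℝ ℝ)

lemma ConcaveOn.comp_add_mul_add_comp_sub_mul {f : ℝ → ℝ} (hf : ConcaveOn ℝ (Ici 0) f)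
    {C c : ℝ} (hc : |c| ≤ C) :
    ConcaveOn ℝ (Icc (-1 : ℝ) 1) fun t => f (C + c * t) + f (C - c * t) := by
  have hneg : |-c| ≤ C := by rwa [abs_neg]
  have hplus := (hf.comp_add_mul C c).subset (Icc_subset_preimage_add_mul_Ici hc) (convex_Icc _ _)
  have hminus :=
    (hf.comp_add_mul C (-c)).subset (Icc_subset_preimage_add_mul_Ici hneg) (convex_Icc _ _)
  have hsum := hplus.add hminus
  simp only [neg_mul, ← sub_eq_add_neg] at hsum
  exact hsum

lemma ConvexOn.comp_add_mul_add_comp_sub_mul {f : ℝ → ℝ} (hf : ConvexOn ℝ (Ici 0) f)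
    {C c : ℝ} (hc : |c| ≤ C) :
    ConvexOn ℝ (Icc (-1 : ℝ) 1) fun t => f (C + c * t) + f (C - c * t) := by
  have h := (hf.neg.comp_add_mul_add_comp_sub_mul hc).neg
  simp only [Pi.neg_def, neg_add, neg_neg] at h
  exact h

theorem concave_convex_c_general (a b : ℝ) (p : ℝ) :
    (1 ≤ p → p < 2 →
      ConcaveOn ℝ (Set.Icc (-1 : ℝ) 1)
        (fun t : ℝ => (a ^ 2 + b ^ 2 + 2 * a * b * t) ^ (p / 2) +
          (a ^ 2 + b ^ 2 - 2 * a * b * t) ^ (p / 2))) ∧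
    (2 < p →
      ConvexOn ℝ (Set.Icc (-1 : ℝ) 1)
        (fun t : ℝ => (a ^ 2 + b ^ 2 + 2 * a * b * t) ^ (p / 2) +
          (a ^ 2 + b ^ 2 - 2 * a * b * t) ^ (p / 2))) := by
  have hc := abs_two_mul_le_add_sq a b
  constructor
  · intro hp₁ hp₂
    exact (Real.concaveOn_rpow (by linarith) (by linarith)).comp_add_mul_add_comp_sub_mul hc
  · intro hp
    exact (convexOn_rpow (by linarith)).comp_add_mul_add_comp_sub_mul hc

/-- For `a, b ≥ 0`, the function `c(t) = (a² + b² + 2abt)^{p/2} + (a² + b² − 2abt)^{p/2}`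
is concave on `[−1, 1]` when `1 ≤ p < 2`, and convex on `[−1, 1]` when `p > 2`. -/
theorem concave_convex_c (a b : ℝ) (ha : 0 ≤ a) (hb : 0 ≤ b) (p : ℝ) :
    (1 ≤ p → p < 2 →
      ConcaveOn ℝ (Set.Icc (-1 : ℝ) 1)
        (fun t : ℝ => (a ^ 2 + b ^ 2 + 2 * a * b * t) ^ (p / 2) +
          (a ^ 2 + b ^ 2 - 2 * a * b * t) ^ (p / 2))) ∧
    (2 < p →
      ConvexOn ℝ (Set.Icc (-1 : ℝ) 1)
        (fun t : ℝ => (a ^ 2 + b ^ 2 + 2 * a * b * t) ^ (p / 2) +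
          (a ^ 2 + b ^ 2 - 2 * a * b * t) ^ (p / 2))) :=
  concave_convex_c_general a b p
end

section
/- Let n ≥ 1 and let A and B be Hermitian n×n complex matrices such that A − |B| is positive definite, where |B| = (B*B)^{1/2}. Then for each k, the k-th largest singular value of A is strictly greater than the k-th largest singular value of B; equivalently, Σ↑(A) − Σ↑(B) is positive definite. -/
/-!
Since `|B| ≥ 0`, the matrix `A = (A - |B|) + |B|` is positive definite, so `|A| = A` and the
claim is Weyl's monotonicity for the eigenvalues of `A` and `C = |B|` under `A - C > 0`. For the
`k`-th smallest eigenvalues, a dimension count yields a nonzero `x` spanned both by the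
eigenvectors of `C` for its `n - k` largest eigenvalues and by those of `A` for its `k + 1`
smallest, and then `λₖ(C) ‖x‖² ≤ ⟪x, C x⟫ < ⟪x, A x⟫ ≤ λₖ(A) ‖x‖²`.
-/

open ComplexOrder

namespace Matrix.PosSemidef

/-- The positive semidefinite square root of a positive semidefinite matrix
(the definition of the older Mathlib, since removed). -/
noncomputable def sqrt {𝕜 : Type*} [RCLike 𝕜] {n : Type*} [Fintype n] [DecidableEq n]
    {A : Matrix n n 𝕜} (hA : A.PosSemidef) : Matrix n n 𝕜 :=
  (hA.1.eigenvectorUnitary : Matrix n n 𝕜) *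
    Matrix.diagonal (((↑) : ℝ → 𝕜) ∘ (√·) ∘ hA.1.eigenvalues) *
    (star hA.1.eigenvectorUnitary : Matrix n n 𝕜)

theorem posSemidef_sqrt {𝕜 : Type*} [RCLike 𝕜] {n : Type*} [Fintype n] [DecidableEq n]
    {A : Matrix n n 𝕜} (hA : A.PosSemidef) : hA.sqrt.PosSemidef := by
  unfold sqrt
  have hd : (Matrix.diagonal (((↑) : ℝ → 𝕜) ∘ (√·) ∘ hA.1.eigenvalues)).PosSemidef := by
    apply Matrix.PosSemidef.diagonal
    intro i
    simp only [Pi.zero_apply, Function.comp_apply]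
    exact_mod_cast Real.sqrt_nonneg _
  convert hd.mul_mul_conjTranspose_same (hA.1.eigenvectorUnitary : Matrix n n 𝕜) using 2
  first
    | rfl
    | simp [Matrix.star_eq_conjTranspose]

end Matrix.PosSemidef

/-- `|A| = (AᴴA)^{1/2}`, the absolute value of a complex matrix. -/
noncomputable def matAbs {n : ℕ} (A : Matrix (Fin n) (Fin n) ℂ) :
    Matrix (Fin n) (Fin n) ℂ :=
  (Matrix.posSemidef_conjTranspose_mul_self A).sqrt

/-- The real power `A^p` of a matrix, defined via the continuous functional calculus
(meaningful when `A` is Hermitian/positive semidefinite). -/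
noncomputable def mpow {n : ℕ} (A : Matrix (Fin n) (Fin n) ℂ) (p : ℝ) :
    Matrix (Fin n) (Fin n) ℂ :=
  cfc (fun x : ℝ => x ^ p) A

/-- The singular values `σ₁(A) ≥ σ₂(A) ≥ … ≥ σₙ(A)` of `A`, i.e. the eigenvalues of `|A|`
arranged in decreasing order. -/
noncomputable def singVals {n : ℕ} (A : Matrix (Fin n) (Fin n) ℂ) : Fin n → ℝ :=
  fun k =>
    ((Matrix.posSemidef_conjTranspose_mul_self A).posSemidef_sqrt.1.eigenvalues ∘
      Tuple.sort (Matrix.posSemidef_conjTranspose_mul_self A).posSemidef_sqrt.1.eigenvalues) k.rev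

/-- `Σ↑(A)`: the diagonal matrix with diagonal entries `σ₁(A), …, σₙ(A)` in that order. -/
noncomputable def SigmaUp {n : ℕ} (A : Matrix (Fin n) (Fin n) ℂ) :
    Matrix (Fin n) (Fin n) ℂ :=
  Matrix.diagonal fun k => (singVals A k : ℂ)

/-- `Σ↓(A)`: the diagonal matrix with diagonal entries `σₙ(A), …, σ₁(A)` in that order. -/
noncomputable def SigmaDown {n : ℕ} (A : Matrix (Fin n) (Fin n) ℂ) :
    Matrix (Fin n) (Fin n) ℂ :=
  Matrix.diagonal fun k => (singVals A k.rev : ℂ)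

/-- `‖A‖_p^p = Tr(|A|^p)`, the `p`-th power of the Schatten `p`-norm. -/
noncomputable def schattenPow {n : ℕ} (p : ℝ) (A : Matrix (Fin n) (Fin n) ℂ) : ℝ :=
  (Matrix.trace (mpow (matAbs A) p)).re

open Matrix Module
open scoped InnerProductSpace

theorem Submodule.exists_mem_inf_ne_zero_of_finrank_lt_add {K V : Type*} [DivisionRing K]
    [AddCommGroup V] [Module K V] [FiniteDimensional K V] {s t : Submodule K V}
    (h : finrank K V < finrank K s + finrank K t) : ∃ x ∈ s, x ∈ t ∧ x ≠ 0 := by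
  by_contra! hst
  exact h.not_ge (Submodule.finrank_add_finrank_le_of_disjoint (Submodule.disjoint_def.2 hst))

namespace OrthonormalBasis

variable {ι 𝕜 E : Type*} [RCLike 𝕜] [NormedAddCommGroup E] [InnerProductSpace 𝕜 E] [Fintype ι]
  (b : OrthonormalBasis ι 𝕜 E)

theorem finrank_span_image (s : Finset ι) :
    finrank 𝕜 (Submodule.span 𝕜 (b '' s)) = s.card := by
  rw [Set.image_eq_range, finrank_span_eq_card]
  · simp
  · exact b.orthonormal.linearIndependent.comp _ Subtype.val_injective

theorem repr_eq_zero_of_mem_span {s : Set ι} {x : E} (hx : x ∈ Submodule.span 𝕜 (b '' s))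
    {j : ι} (hj : j ∉ s) : b.repr x j = 0 := by
  rw [← b.coe_toBasis, b.toBasis.mem_span_image] at hx
  rw [← b.coe_toBasis_repr_apply, ← Finsupp.notMem_support_iff]
  exact fun h => hj (hx h)

end OrthonormalBasis

namespace Matrix.IsHermitian

section Quadratic

variable {𝕜 : Type*} [RCLike 𝕜] {n : Type*} [Fintype n] [DecidableEq n]
  {A : Matrix n n 𝕜} (hA : A.IsHermitian)
include hA

theorem toEuclideanLin_eigenvectorBasis (j : n) :
    toEuclideanLin A (hA.eigenvectorBasis j) = (hA.eigenvalues j : 𝕜) • hA.eigenvectorBasis j := by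
  rw [toLpLin_apply, hA.mulVec_eigenvectorBasis, RCLike.real_smul_eq_coe_smul (K := 𝕜)]
  rfl

theorem re_star_dotProduct_mulVec_eq_sum (x : EuclideanSpace 𝕜 n) :
    RCLike.re (star x.ofLp ⬝ᵥ A *ᵥ x.ofLp) =
      ∑ j, hA.eigenvalues j * ‖hA.eigenvectorBasis.repr x j‖ ^ 2 := by
  set b := hA.eigenvectorBasis
  have hquad : star x.ofLp ⬝ᵥ A *ᵥ x.ofLp = ⟪x, toEuclideanLin A x⟫_𝕜 := by
    rw [EuclideanSpace.inner_eq_star_dotProduct, dotProduct_comm]; rfl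
  rw [hquad, ← b.sum_inner_mul_inner, map_sum]
  refine Finset.sum_congr rfl fun j _ => ?_
  rw [← (isSymmetric_toEuclideanLin_iff.mpr hA) (b j), toEuclideanLin_eigenvectorBasis,
    inner_smul_left, RCLike.conj_ofReal, mul_left_comm, RCLike.re_ofReal_mul,
    inner_mul_symm_re_eq_norm, norm_mul, ← inner_conj_symm x, RCLike.norm_conj,
    b.repr_apply_apply, sq]

theorem mul_norm_sq_le_re_star_dotProduct_mulVec {s : Set n} {c : ℝ}
    (hc : ∀ j ∈ s, c ≤ hA.eigenvalues j) {x : EuclideanSpace 𝕜 n}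
    (hx : x ∈ Submodule.span 𝕜 (hA.eigenvectorBasis '' s)) :
    c * ‖x‖ ^ 2 ≤ RCLike.re (star x.ofLp ⬝ᵥ A *ᵥ x.ofLp) := by
  rw [re_star_dotProduct_mulVec_eq_sum, ← hA.eigenvectorBasis.sum_sq_norm_inner_right,
    Finset.mul_sum]
  refine Finset.sum_le_sum fun j _ => ?_
  rw [← OrthonormalBasis.repr_apply_apply]
  by_cases hj : j ∈ s
  · exact mul_le_mul_of_nonneg_right (hc j hj) (sq_nonneg _)
  · simp [hA.eigenvectorBasis.repr_eq_zero_of_mem_span hx hj]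

theorem re_star_dotProduct_mulVec_le_mul_norm_sq {s : Set n} {c : ℝ}
    (hc : ∀ j ∈ s, hA.eigenvalues j ≤ c) {x : EuclideanSpace 𝕜 n}
    (hx : x ∈ Submodule.span 𝕜 (hA.eigenvectorBasis '' s)) :
    RCLike.re (star x.ofLp ⬝ᵥ A *ᵥ x.ofLp) ≤ c * ‖x‖ ^ 2 := by
  rw [re_star_dotProduct_mulVec_eq_sum, ← hA.eigenvectorBasis.sum_sq_norm_inner_right,
    Finset.mul_sum]
  refine Finset.sum_le_sum fun j _ => ?_
  rw [← OrthonormalBasis.repr_apply_apply]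
  by_cases hj : j ∈ s
  · exact mul_le_mul_of_nonneg_right (hc j hj) (sq_nonneg _)
  · simp [hA.eigenvectorBasis.repr_eq_zero_of_mem_span hx hj]

end Quadratic

variable {𝕜 : Type*} [RCLike 𝕜] {n : ℕ} {A C : Matrix (Fin n) (Fin n) 𝕜}

/-- The eigenvalues in increasing order. -/
noncomputable def sortedEigenvalues (hA : A.IsHermitian) : Fin n → ℝ :=
  hA.eigenvalues ∘ Tuple.sort hA.eigenvalues

theorem sortedEigenvalues_lt_of_posDef_sub (hA : A.IsHermitian) (hC : C.IsHermitian)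
    (h : (A - C).PosDef) (k : Fin n) : hC.sortedEigenvalues k < hA.sortedEigenvalues k := by
  classical
  set sC := (Finset.Ici k).image (Tuple.sort hC.eigenvalues)
  set sA := (Finset.Iic k).image (Tuple.sort hA.eigenvalues)
  obtain ⟨x, hxC, hxA, hx⟩ := Submodule.exists_mem_inf_ne_zero_of_finrank_lt_add
    (s := Submodule.span 𝕜 (hC.eigenvectorBasis '' sC))
    (t := Submodule.span 𝕜 (hA.eigenvectorBasis '' sA)) (by
      simp only [OrthonormalBasis.finrank_span_image, sC, sA, finrank_euclideanSpace_fin,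
        Finset.card_image_of_injective _ (Tuple.sort _).injective, Fin.card_Ici, Fin.card_Iic]
      omega)
  have hCx : hC.sortedEigenvalues k * ‖x‖ ^ 2 ≤ RCLike.re (star x.ofLp ⬝ᵥ C *ᵥ x.ofLp) := by
    refine hC.mul_norm_sq_le_re_star_dotProduct_mulVec (fun j hj => ?_) hxC
    obtain ⟨i, hi, rfl⟩ := Finset.mem_image.mp hj
    exact Tuple.monotone_sort hC.eigenvalues (Finset.mem_Ici.mp hi)
  have hAx : RCLike.re (star x.ofLp ⬝ᵥ A *ᵥ x.ofLp) ≤ hA.sortedEigenvalues k * ‖x‖ ^ 2 := by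
    refine hA.re_star_dotProduct_mulVec_le_mul_norm_sq (fun j hj => ?_) hxA
    obtain ⟨i, hi, rfl⟩ := Finset.mem_image.mp hj
    exact Tuple.monotone_sort hA.eigenvalues (Finset.mem_Iic.mp hi)
  have hCA : RCLike.re (star x.ofLp ⬝ᵥ C *ᵥ x.ofLp) < RCLike.re (star x.ofLp ⬝ᵥ A *ᵥ x.ofLp) := by
    have := h.dotProduct_mulVec_pos (x := x.ofLp) (by simpa using hx)
    rw [sub_mulVec, dotProduct_sub, RCLike.pos_iff] at this
    simpa using this.1
  have hxpos : 0 < ‖x‖ ^ 2 := by positivity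
  exact lt_of_mul_lt_mul_right (hCx.trans_lt (hCA.trans_le hAx)) hxpos.le

end Matrix.IsHermitian

open scoped MatrixOrder in
theorem matAbs_of_posSemidef {n : ℕ} {A : Matrix (Fin n) (Fin n) ℂ} (hA : A.PosSemidef) :
    matAbs A = A := by
  have hAA := posSemidef_conjTranspose_mul_self A
  have hsqrt : matAbs A = cfc Real.sqrt (Aᴴ * A) := by
    rw [hAA.1.cfc_eq]
    simp [matAbs, PosSemidef.sqrt, IsHermitian.cfc, Function.comp_def]
  have h0 : 0 ≤ Aᴴ * A := nonneg_iff_posSemidef.mpr hAA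
  rw [hsqrt, ← cfcₙ_eq_cfc, ← CFC.sqrt_eq_real_sqrt _ h0,
    CFC.sqrt_eq_iff _ _ h0 (nonneg_iff_posSemidef.mpr hA), hA.1.eq]

theorem singVals_eq_sortedEigenvalues {n : ℕ} {A M : Matrix (Fin n) (Fin n) ℂ}
    (hM : M.IsHermitian) (hAM : matAbs A = M) (k : Fin n) :
    singVals A k = hM.sortedEigenvalues k.rev := by
  subst hAM
  rfl

theorem singVals_strict_mono_general (n : ℕ)
    (A B : Matrix (Fin n) (Fin n) ℂ)
    (h : (A - matAbs B).PosDef) :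
    (∀ k : Fin n, singVals B k < singVals A k) ∧ (SigmaUp A - SigmaUp B).PosDef := by
  have hB : (matAbs B).PosSemidef := (posSemidef_conjTranspose_mul_self B).posSemidef_sqrt
  have hA : A.PosDef := by simpa using h.add_posSemidef hB
  have hlt (k : Fin n) : singVals B k < singVals A k := by
    rw [singVals_eq_sortedEigenvalues hA.isHermitian (matAbs_of_posSemidef hA.posSemidef),
      singVals_eq_sortedEigenvalues hB.isHermitian rfl]
    exact hA.isHermitian.sortedEigenvalues_lt_of_posDef_sub hB.isHermitian h k.rev
  refine ⟨hlt, ?_⟩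
  rw [SigmaUp, SigmaUp, diagonal_sub]
  exact PosDef.diagonal fun k => by simpa [← Complex.ofReal_sub] using sub_pos.2 (hlt k)

/-- If `A`, `B` are Hermitian and `A − |B|` is positive definite, then every singular value of
`A` strictly dominates the corresponding singular value of `B`; equivalently
`Σ↑(A) − Σ↑(B)` is positive definite. -/
theorem singVals_strict_mono (n : ℕ) (hn : 1 ≤ n)
    (A B : Matrix (Fin n) (Fin n) ℂ) (hA : A.IsHermitian) (hB : B.IsHermitian)
    (h : (A - matAbs B).PosDef) :
    (∀ k : Fin n, singVals B k < singVals A k) ∧ (SigmaUp A - SigmaUp B).PosDef :=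
  singVals_strict_mono_general n A B h
end
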